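/- arXiv:1705.09180 — 3 statements merged into one kernel-verified Lean document; each statement's English description precedes it below -/
import Mathlib

section
/- The minimum labeled split-tour length is at most the minimum unlabeled split-tour length plus 2nε: min over permutations σ of L(σ) ≤ (min over pairs of permutations (σ, τ) of U(σ, τ)) + 2nε. -/
/-! `L(σ)` is `U(σ, σ)`. Replacing the goal `g_{τ(i)}` visited after `s_{σ(i)}` by `g_{σ(i)}`
lengthens the two legs at that goal by at most `2 dist(s_{σ(i)}, g_{σ(i)}) = 2ε`, by the triangle
inequality through `s_{σ(i)}`; summing over the `n` goals gives `L(σ) ≤ U(σ, τ) + 2nε`. -/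

/-- The start position of the split pair: `pᵢ` shifted left by `ε/2` along the x-axis
(the plane is modeled by `ℂ`). -/
noncomputable def startPt (q : ℂ) (ε : ℝ) : ℂ := q - (ε : ℂ) / 2

/-- The goal position of the split pair: `pᵢ` shifted right by `ε/2` along the x-axis. -/
noncomputable def goalPt (q : ℂ) (ε : ℝ) : ℂ := q + (ε : ℂ) / 2

/-- The TSP tour length `T(σ)` through `p₀, p_{σ(1)}, …, p_{σ(n)}, p₀`.
Points `p₁, …, pₙ` are `p i.succ` for `i : Fin n`. -/
noncomputable def tourT (n : ℕ) (hn : 0 < n) (p : Fin (n + 1) → ℂ)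
    (σ : Equiv.Perm (Fin n)) : ℝ :=
  dist (p 0) (p (σ ⟨0, hn⟩).succ)
    + ∑ i : Fin (n - 1),
        dist (p (σ ⟨i.1, by have := i.2; omega⟩).succ)
             (p (σ ⟨i.1 + 1, by have := i.2; omega⟩).succ)
    + dist (p (σ ⟨n - 1, by omega⟩).succ) (p 0)

/-- The labeled split-tour length `L(σ)`:
`dist(p₀,s_{σ(1)}) + Σᵢ dist(s_{σ(i)},g_{σ(i)}) + Σᵢ dist(g_{σ(i)},s_{σ(i+1)}) + dist(g_{σ(n)},p₀)`. -/
noncomputable def tourL (n : ℕ) (hn : 0 < n) (p : Fin (n + 1) → ℂ) (ε : ℝ)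
    (σ : Equiv.Perm (Fin n)) : ℝ :=
  dist (p 0) (startPt (p (σ ⟨0, hn⟩).succ) ε)
    + ∑ i : Fin n, dist (startPt (p (σ i).succ) ε) (goalPt (p (σ i).succ) ε)
    + ∑ i : Fin (n - 1),
        dist (goalPt (p (σ ⟨i.1, by have := i.2; omega⟩).succ) ε)
             (startPt (p (σ ⟨i.1 + 1, by have := i.2; omega⟩).succ) ε)
    + dist (goalPt (p (σ ⟨n - 1, by omega⟩).succ) ε) (p 0)

/-- The unlabeled split-tour length `U(σ, τ)`:
`dist(p₀,s_{σ(1)}) + Σᵢ dist(s_{σ(i)},g_{τ(i)}) + Σᵢ dist(g_{τ(i)},s_{σ(i+1)}) + dist(g_{τ(n)},p₀)`. -/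
noncomputable def tourU (n : ℕ) (hn : 0 < n) (p : Fin (n + 1) → ℂ) (ε : ℝ)
    (σ τ : Equiv.Perm (Fin n)) : ℝ :=
  dist (p 0) (startPt (p (σ ⟨0, hn⟩).succ) ε)
    + ∑ i : Fin n, dist (startPt (p (σ i).succ) ε) (goalPt (p (τ i).succ) ε)
    + ∑ i : Fin (n - 1),
        dist (goalPt (p (τ ⟨i.1, by have := i.2; omega⟩).succ) ε)
             (startPt (p (σ ⟨i.1 + 1, by have := i.2; omega⟩).succ) ε)
    + dist (goalPt (p (τ ⟨n - 1, by omega⟩).succ) ε) (p 0)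

theorem dist_add_dist_le_two_mul_dist_add_dist {X : Type*} [PseudoMetricSpace X] (a b c x : X) :
    dist a b + dist b x ≤ 2 * dist a b + (dist a c + dist c x) := by
  linarith [dist_triangle4 b a c x, dist_comm a b]

theorem sum_dist_chain_le_sum_dist_chain_add {X : Type*} [PseudoMetricSpace X] {m : ℕ}
    (s g h : Fin (m + 1) → X) (x₀ : X) :
    ∑ i, dist (s i) (g i) + ∑ i : Fin m, dist (g i.castSucc) (s i.succ) + dist (g (Fin.last m)) x₀
      ≤ ∑ i, dist (s i) (h i) + ∑ i : Fin m, dist (h i.castSucc) (s i.succ)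
          + dist (h (Fin.last m)) x₀ + 2 * ∑ i, dist (s i) (g i) := by
  let next : Fin (m + 1) → X := Fin.lastCases x₀ fun i => s i.succ
  have hsum : ∀ f : Fin (m + 1) → X,
      ∑ i, dist (s i) (f i) + ∑ i : Fin m, dist (f i.castSucc) (s i.succ) + dist (f (Fin.last m)) x₀
        = ∑ i, (dist (s i) (f i) + dist (f i) (next i)) := by
    intro f
    simp only [Finset.sum_add_distrib, Fin.sum_univ_castSucc (fun i => dist (f i) (next i)), next,
      Fin.lastCases_castSucc, Fin.lastCases_last, add_assoc]
  rw [hsum g, hsum h, Finset.mul_sum, ← Finset.sum_add_distrib]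
  exact Finset.sum_le_sum fun i _ => by
    linarith [dist_add_dist_le_two_mul_dist_add_dist (s i) (g i) (h i) (next i)]

theorem dist_startPt_goalPt (q : ℂ) {ε : ℝ} (hε : 0 ≤ ε) :
    dist (startPt q ε) (goalPt q ε) = ε := by
  have : startPt q ε - goalPt q ε = -(ε : ℂ) := by
    simp only [startPt, goalPt]
    ring
  rw [Complex.dist_eq, this, norm_neg, Complex.norm_real, Real.norm_of_nonneg hε]

theorem tourL_le_tourU_add {n : ℕ} (hn : 0 < n) (p : Fin (n + 1) → ℂ) {ε : ℝ} (hε : 0 ≤ ε)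
    (σ τ : Equiv.Perm (Fin n)) : tourL n hn p ε σ ≤ tourU n hn p ε σ τ + 2 * n * ε := by
  obtain ⟨m, rfl⟩ : ∃ m, n = m + 1 := ⟨n - 1, by omega⟩
  let s i := startPt (p (σ i).succ) ε
  let g i := goalPt (p (σ i).succ) ε
  let h i := goalPt (p (τ i).succ) ε
  have hL : tourL (m + 1) hn p ε σ = dist (p 0) (s 0) + ∑ i, dist (s i) (g i)
      + ∑ i : Fin m, dist (g i.castSucc) (s i.succ) + dist (g (Fin.last m)) (p 0) := rfl
  have hU : tourU (m + 1) hn p ε σ τ = dist (p 0) (s 0) + ∑ i, dist (s i) (h i)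
      + ∑ i : Fin m, dist (h i.castSucc) (s i.succ) + dist (h (Fin.last m)) (p 0) := rfl
  have hsg : ∑ i, dist (s i) (g i) = (m + 1) * ε := by
    simp [s, g, dist_startPt_goalPt _ hε]
  have := sum_dist_chain_le_sum_dist_chain_add s g h (p 0)
  rw [hsg] at this
  push_cast
  linarith

/-- The minimum labeled split-tour length is at most the minimum unlabeled split-tour
length plus 2nε: min_σ L(σ) ≤ (min_{(σ,τ)} U(σ,τ)) + 2nε. -/
theorem stmt_4 (n : ℕ) (hn : 0 < n) (p : Fin (n + 1) → ℂ) (ε : ℝ) (hε : 0 < ε)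
    (Lopt Uopt : ℝ)
    (hL : IsLeast (Set.range (tourL n hn p ε)) Lopt)
    (hU : IsLeast (Set.range fun στ : Equiv.Perm (Fin n) × Equiv.Perm (Fin n) =>
        tourU n hn p ε στ.1 στ.2) Uopt) :
    Lopt ≤ Uopt + 2 * n * ε := by
  obtain ⟨⟨σ, τ⟩, rfl⟩ := hU.1
  exact (hL.2 ⟨σ, rfl⟩).trans (tourL_le_tourU_add hn p hε.le σ τ)
end

section
/- Suppose all pairwise Euclidean distances dist(pᵢ, pⱼ), 0 ≤ i, j ≤ n, are integers and 0 < ε < 1/(4n). Let D_opt = min over permutations σ of T(σ) and U_opt = min over pairs of permutations (σ, τ) of U(σ, τ). Then |U_opt − D_opt| < 1/2; in particular D_opt is the unique integer at distance less than 1/2 from U_opt. -/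
/-!
Each start or goal point lies within `ε/2` of its point `pᵢ`, so every leg of a split tour
differs by at most `ε` from the corresponding leg between the points `pᵢ`; over the `2n + 1`
legs this moves the length by at most `2nε < 1/2`. Replacing starts and goals by their points,
`U(σ, τ)` becomes the length of the closed walk `p₀, p_{σ(1)}, p_{τ(1)}, …, p_{σ(n)}, p_{τ(n)}, p₀`,
and dropping the `τ`-visits (triangle inequality) leaves the tour `T(σ)`. Hence
`D_opt ≤ U_opt + 2nε` and `U_opt ≤ U(σ, σ) ≤ D_opt + 2nε`, while `D_opt`, a sum of integer
distances, is an integer.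
-/

open Finset

section TourLength

variable {α : Type*} [PseudoMetricSpace α] {k : ℕ}

noncomputable def tourLength (a : α) (x : Fin (k + 1) → α) : ℝ :=
  dist a (x 0) + ∑ i : Fin k, dist (x i.castSucc) (x i.succ) + dist (x (Fin.last k)) a

noncomputable def splitTourLength (a : α) (x y : Fin (k + 1) → α) : ℝ :=
  dist a (x 0) + ∑ i, dist (x i) (y i) + ∑ i : Fin k, dist (y i.castSucc) (x i.succ)
    + dist (y (Fin.last k)) a

theorem splitTourLength_self (a : α) (x : Fin (k + 1) → α) :
    splitTourLength a x x = tourLength a x := by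
  simp [splitTourLength, tourLength]

theorem tourLength_le_splitTourLength (a : α) (x y : Fin (k + 1) → α) :
    tourLength a x ≤ splitTourLength a x y := by
  have hlegs : ∑ i : Fin k, dist (x i.castSucc) (x i.succ)
      ≤ ∑ i : Fin k, (dist (x i.castSucc) (y i.castSucc) + dist (y i.castSucc) (x i.succ)) :=
    sum_le_sum fun i _ ↦ dist_triangle _ _ _
  have hlast := dist_triangle (x (Fin.last k)) (y (Fin.last k)) a
  rw [sum_add_distrib] at hlegs
  rw [tourLength, splitTourLength, Fin.sum_univ_castSucc]
  linarith

theorem abs_splitTourLength_sub_le (a : α) {x y x' y' : Fin (k + 1) → α} {r : ℝ}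
    (hx : ∀ i, dist (x i) (x' i) ≤ r) (hy : ∀ i, dist (y i) (y' i) ≤ r) :
    |splitTourLength a x y - splitTourLength a x' y'| ≤ 4 * (k + 1) * r := by
  suffices key : ∀ {x y x' y' : Fin (k + 1) → α}, (∀ i, dist (x i) (x' i) ≤ r) →
      (∀ i, dist (y i) (y' i) ≤ r) →
      splitTourLength a x y ≤ splitTourLength a x' y' + 4 * (k + 1) * r by
    rw [abs_sub_le_iff]
    constructor
    · linarith [key hx hy]
    · linarith [key (fun i ↦ (dist_comm (x' i) (x i)).trans_le (hx i))
        (fun i ↦ (dist_comm (y' i) (y i)).trans_le (hy i))]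
  intro x y x' y' hx hy
  have hfirst : dist a (x 0) ≤ dist a (x' 0) + r :=
    (dist_triangle _ _ _).trans (by linarith [hx 0, dist_comm (x' 0) (x 0)])
  have hlast : dist (y (Fin.last k)) a ≤ dist (y' (Fin.last k)) a + r :=
    (dist_triangle _ _ _).trans (by linarith [hy (Fin.last k)])
  have hpairs : ∑ i, dist (x i) (y i) ≤ ∑ i, (dist (x' i) (y' i) + 2 * r) :=
    sum_le_sum fun i _ ↦ (dist_triangle4 _ (x' i) (y' i) _).trans
      (by linarith [hx i, hy i, dist_comm (y i) (y' i)])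
  have hlegs : ∑ i : Fin k, dist (y i.castSucc) (x i.succ)
      ≤ ∑ i : Fin k, (dist (y' i.castSucc) (x' i.succ) + 2 * r) :=
    sum_le_sum fun i _ ↦ (dist_triangle4 _ (y' i.castSucc) (x' i.succ) _).trans
      (by linarith [hy i.castSucc, hx i.succ, dist_comm (x i.succ) (x' i.succ)])
  simp only [sum_add_distrib, sum_const, card_univ, Fintype.card_fin, nsmul_eq_mul] at hpairs hlegs
  simp only [splitTourLength]
  push_cast at hpairs
  linarith

theorem exists_int_tourLength_eq {ι : Type*} (p : ι → α)
    (hint : ∀ i j, ∃ m : ℤ, dist (p i) (p j) = m) (a : ι) (x : Fin (k + 1) → ι) :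
    ∃ m : ℤ, tourLength (p a) (p ∘ x) = m := by
  choose d hd using hint
  exact ⟨d a (x 0) + ∑ i : Fin k, d (x i.castSucc) (x i.succ) + d (x (Fin.last k)) a, by
    simp [tourLength, hd]⟩

end TourLength

theorem dist_startPt (q : ℂ) (ε : ℝ) : dist q (startPt q ε) = |ε| / 2 := by
  simp [startPt, dist_self_sub_right]

theorem dist_goalPt (q : ℂ) (ε : ℝ) : dist q (goalPt q ε) = |ε| / 2 := by
  simp [goalPt, dist_self_add_right]

theorem tourT_eq_tourLength (k : ℕ) (hn : 0 < k + 1) (p : Fin (k + 2) → ℂ)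
    (σ : Equiv.Perm (Fin (k + 1))) :
    tourT (k + 1) hn p σ = tourLength (p 0) (fun i ↦ p (σ i).succ) :=
  rfl

theorem tourU_eq_splitTourLength (k : ℕ) (hn : 0 < k + 1) (p : Fin (k + 2) → ℂ) (ε : ℝ)
    (σ τ : Equiv.Perm (Fin (k + 1))) :
    tourU (k + 1) hn p ε σ τ = splitTourLength (p 0)
      (fun i ↦ startPt (p (σ i).succ) ε) (fun i ↦ goalPt (p (τ i).succ) ε) :=
  rfl

theorem Int.eq_of_abs_sub_lt_half {x : ℝ} {m m' : ℤ} (h : |x - m| < 1 / 2)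
    (h' : |x - m'| < 1 / 2) : m = m' := by
  have : |((m - m' : ℤ) : ℝ)| < 1 := by
    push_cast
    rw [abs_sub_lt_iff] at h h' ⊢
    constructor <;> linarith [h.1, h.2, h'.1, h'.2]
  exact sub_eq_zero.mp (Int.abs_lt_one_iff.mp (by exact_mod_cast this))

/-- Suppose all pairwise Euclidean distances dist(pᵢ,pⱼ) are integers and 0 < ε < 1/(4n).
Let D_opt = min over σ of T(σ) and U_opt = min over pairs (σ,τ) of U(σ,τ).
Then |U_opt − D_opt| < 1/2; in particular D_opt is the unique integer at distance less
than 1/2 from U_opt. -/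
theorem stmt_5 (n : ℕ) (hn : 0 < n) (p : Fin (n + 1) → ℂ)
    (hint : ∀ i j : Fin (n + 1), ∃ m : ℤ, dist (p i) (p j) = (m : ℝ))
    (ε : ℝ) (hε : 0 < ε) (hε' : ε < 1 / (4 * n))
    (Dopt Uopt : ℝ)
    (hD : IsLeast (Set.range (tourT n hn p)) Dopt)
    (hU : IsLeast (Set.range fun στ : Equiv.Perm (Fin n) × Equiv.Perm (Fin n) =>
        tourU n hn p ε στ.1 στ.2) Uopt) :
    |Uopt - Dopt| < 1 / 2 ∧ (∃ m : ℤ, (m : ℝ) = Dopt) ∧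
      ∀ m : ℤ, |Uopt - (m : ℝ)| < 1 / 2 → (m : ℝ) = Dopt := by
  obtain ⟨k, rfl⟩ : ∃ k, n = k + 1 := ⟨n - 1, by omega⟩
  set c : ℝ := 4 * (k + 1) * (ε / 2)
  have hc : c < 1 / 2 := by
    push_cast at hε'
    rw [lt_div_iff₀ (by positivity)] at hε'
    linarith [show c = ε * (4 * (k + 1)) / 2 by ring]
  have hsplit : ∀ σ τ, |tourU (k + 1) hn p ε σ τ
      - splitTourLength (p 0) (fun i ↦ p (σ i).succ) (fun i ↦ p (τ i).succ)| ≤ c := by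
    intro σ τ
    rw [tourU_eq_splitTourLength]
    exact abs_splitTourLength_sub_le _ (fun i ↦ by rw [dist_comm, dist_startPt, abs_of_pos hε])
      (fun i ↦ by rw [dist_comm, dist_goalPt, abs_of_pos hε])
  obtain ⟨σ₀, hσ₀⟩ := hD.1
  obtain ⟨⟨σ, τ⟩, hστ⟩ := hU.1
  have hUD : Uopt ≤ Dopt + c := calc
    Uopt ≤ tourU (k + 1) hn p ε σ₀ σ₀ := hU.2 ⟨(σ₀, σ₀), rfl⟩
    _ ≤ tourLength (p 0) (fun i ↦ p (σ₀ i).succ) + c := by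
      rw [← splitTourLength_self]
      linarith [abs_le.1 (hsplit σ₀ σ₀)]
    _ = Dopt + c := by rw [← tourT_eq_tourLength k hn, hσ₀]
  have hDU : Dopt ≤ Uopt + c := calc
    Dopt ≤ tourT (k + 1) hn p σ := hD.2 ⟨σ, rfl⟩
    _ = tourLength (p 0) (fun i ↦ p (σ i).succ) := tourT_eq_tourLength _ _ _ _
    _ ≤ splitTourLength (p 0) (fun i ↦ p (σ i).succ) (fun i ↦ p (τ i).succ) :=
      tourLength_le_splitTourLength _ _ _
    _ ≤ Uopt + c := by rw [← hστ]; linarith [abs_le.1 (hsplit σ τ)]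
  have habs : |Uopt - Dopt| < 1 / 2 := abs_sub_lt_iff.2 ⟨by linarith, by linarith⟩
  obtain ⟨m, hm⟩ := exists_int_tourLength_eq p hint 0 (Fin.succ ∘ σ₀)
  have hDm : (m : ℝ) = Dopt := by rw [← hm, ← hσ₀]; rfl
  refine ⟨habs, ⟨m, hDm⟩, fun m' hm' ↦ ?_⟩
  rw [← hDm, Int.eq_of_abs_sub_lt_half hm' (hDm ▸ habs)]
end

section
/- Every tabletop rearrangement instance admits a plan consisting of exactly |{i : sᵢ ≠ gᵢ}| + ν pick-and-place actions, where ν is the minimum cardinality of a feedback vertex set of the dependency digraph of the instance. -/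
/-!
Let `S` be a minimum feedback vertex set of the dependency digraph. Every arc ends at an object
whose start and goal differ, so `S` may be taken inside the set `M` of such objects. Park the
objects of `S` at buffer positions far from every start and goal, then move the objects of
`M \ S` straight to their goals in a topological order of the acyclic digraph left after
deleting `S` (so no goal disc ever meets a start disc that is still occupied), and finally move
the parked objects to their goals: `|S| + |M \ S| + |S| = |M| + ν` actions.
-/

open Metric in
/-- A configuration of `n` unit-disc objects in the plane (modeled by `ℂ`) is feasible
if the closed unit discs centered at the object positions are pairwise disjoint. -/
def FeasibleConfig {n : ℕ} (c : Fin n → ℂ) : Prop :=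
  ∀ i j : Fin n, i ≠ j → Disjoint (closedBall (c i) 1) (closedBall (c j) 1)

/-- A pick-and-place action changes the position of exactly one object. -/
def PickPlace {n : ℕ} (c c' : Fin n → ℂ) : Prop :=
  ∃ i : Fin n, c' i ≠ c i ∧ ∀ j : Fin n, j ≠ i → c' j = c j

/-- `plan`, the list of configurations resulting from the successive pick-and-place
actions, is a plan transforming the start configuration `s` into the goal
configuration `g`: each action changes the position of exactly one object, each
resulting configuration is feasible, and the final configuration is the goal.  The
number of actions of the plan is `plan.length`. -/
def IsPlan {n : ℕ} (s g : Fin n → ℂ) (plan : List (Fin n → ℂ)) : Prop :=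
  List.Chain PickPlace s plan ∧ (∀ c ∈ plan, FeasibleConfig c) ∧
    (s :: plan).getLast (by simp) = g

open Metric in
/-- The dependency digraph of the instance: an arc from `i` to `j` (for `i ≠ j`) exactly
when the closed unit disc centered at `g i` intersects the closed unit disc centered at
`s j`. -/
def DepArc {n : ℕ} (s g : Fin n → ℂ) (i j : Fin n) : Prop :=
  i ≠ j ∧ (Metric.closedBall (g i) 1 ∩ Metric.closedBall (s j) 1).Nonempty

/-- `S` is a feedback vertex set of the digraph with arc relation `A`: the subdigraph
induced on the complement of `S` contains no directed cycle (no nontrivial closed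
directed walk). -/
def IsFVS {V : Type*} (A : V → V → Prop) (S : Set V) : Prop :=
  ∀ x : V, ¬ Relation.TransGen (fun u v => A u v ∧ u ∉ S ∧ v ∉ S) x x

/-- `ν(D)`: the minimum cardinality of a feedback vertex set of the digraph with vertex
type `V` and arc relation `A`. -/
noncomputable def nuFVS {V : Type*} (A : V → V → Prop) : ℕ :=
  sInf {k | ∃ S : Set V, IsFVS A S ∧ S.ncard = k}

open Metric

section Plans

variable {n : ℕ}

theorem isPlan_iff {a d : Fin n → ℂ} {p : List (Fin n → ℂ)} :
    IsPlan a d p ↔ (a :: p).IsChain PickPlace ∧ (∀ c ∈ p, FeasibleConfig c) ∧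
      (a :: p).getLast (List.cons_ne_nil a p) = d :=
  Iff.rfl

theorem isPlan_nil_iff {a d : Fin n → ℂ} : IsPlan a d [] ↔ a = d := by
  simp [isPlan_iff]

theorem isPlan_cons_iff {a c d : Fin n → ℂ} {p : List (Fin n → ℂ)} :
    IsPlan a d (c :: p) ↔ PickPlace a c ∧ FeasibleConfig c ∧ IsPlan c d p := by
  simp only [isPlan_iff, List.isChain_cons_cons, List.forall_mem_cons,
    List.getLast_cons (List.cons_ne_nil c p)]
  tauto

theorem IsPlan.append {a b d : Fin n → ℂ} {p q : List (Fin n → ℂ)} (hp : IsPlan a b p)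
    (hq : IsPlan b d q) : IsPlan a d (p ++ q) := by
  induction p generalizing a with
  | nil => rwa [isPlan_nil_iff.mp hp]
  | cons c p ih =>
    rw [List.cons_append, isPlan_cons_iff] at *
    exact ⟨hp.1, hp.2.1, ih hp.2.2⟩

def moveSeq (f : Fin n → ℂ) : (Fin n → ℂ) → List (Fin n) → List (Fin n → ℂ)
  | _, [] => []
  | c, i :: q => Function.update c i (f i) :: moveSeq f (Function.update c i (f i)) q

theorem moveSeq_length (f c : Fin n → ℂ) (q : List (Fin n)) :
    (moveSeq f c q).length = q.length := by
  induction q generalizing c <;> simp [moveSeq, *]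

theorem Finset.piecewise_update_eq_piecewise_insert {ι β : Type*} [DecidableEq ι]
    (t : Finset ι) (f c : ι → β) (i : ι) :
    t.piecewise f (Function.update c i (f i)) = (insert i t).piecewise f c := by
  rw [Finset.piecewise_insert, Finset.update_piecewise, Function.update_eq_self]

theorem isPlan_moveSeq (f : Fin n → ℂ) {c : Fin n → ℂ} {q : List (Fin n)} (hq : q.Nodup)
    (hmove : ∀ i ∈ q, f i ≠ c i)
    (hfeas : ∀ q₁ q₂, q = q₁ ++ q₂ → FeasibleConfig (q₁.toFinset.piecewise f c)) :
    IsPlan c (q.toFinset.piecewise f c) (moveSeq f c q) := by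
  induction q generalizing c with
  | nil =>
    rw [List.toFinset_nil, Finset.piecewise_empty]
    exact isPlan_nil_iff.mpr rfl
  | cons i q ih =>
    obtain ⟨hiq, hq⟩ := List.nodup_cons.mp hq
    have hpick : PickPlace c (Function.update c i (f i)) :=
      ⟨i, by simpa using hmove i List.mem_cons_self,
        fun j hj => Function.update_of_ne hj _ _⟩
    have hfirst := hfeas [i] q rfl
    rw [List.toFinset_cons, List.toFinset_nil, insert_empty_eq,
      Finset.piecewise_singleton] at hfirst
    have hrest := ih hq (c := Function.update c i (f i)) (fun j hj => ?_) (fun q₁ q₂ h => ?_)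
    · rw [Finset.piecewise_update_eq_piecewise_insert, ← List.toFinset_cons] at hrest
      exact isPlan_cons_iff.mpr ⟨hpick, hfirst, hrest⟩
    · rw [Function.update_of_ne (ne_of_mem_of_not_mem hj hiq)]
      exact hmove j (List.mem_cons_of_mem i hj)
    · rw [Finset.piecewise_update_eq_piecewise_insert, ← List.toFinset_cons]
      exact hfeas (i :: q₁) q₂ (by rw [h, List.cons_append])

end Plans

theorem exists_pairwise_lt_dist_of_isBounded (n : ℕ) {K : Set ℂ} (hK : Bornology.IsBounded K)
    (r : ℝ) : ∃ b : Fin n → ℂ,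
      Pairwise (fun i j => r < dist (b i) (b j)) ∧ ∀ i, ∀ z ∈ K, r < dist (b i) z := by
  obtain ⟨R, hKR⟩ := (isBounded_iff_subset_closedBall 0).mp hK
  set d := |r| + 1
  have hrd : r < d := by linarith [le_abs_self r]
  have hd : 0 < d := by positivity
  set x : Fin n → ℝ := fun i => R + d * ((i : ℕ) + 1)
  refine ⟨fun i => x i, fun i j hij => ?_, fun i z hz => ?_⟩
  · have hij' : 1 ≤ |((i : ℕ) : ℝ) - (j : ℕ)| :=
      Nat.pairwise_one_le_dist (Fin.val_injective.ne hij)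
    have hx : dist (x i) (x j) = d * |((i : ℕ) : ℝ) - (j : ℕ)| := by
      rw [Real.dist_eq, ← abs_of_pos hd, ← abs_mul]
      congr 1
      simp only [x]
      ring
    show r < dist (x i : ℂ) (x j)
    rw [Complex.isometry_ofReal.dist_eq, hx]
    linarith [le_mul_of_one_le_right hd.le hij']
  · have hz' : ‖z‖ ≤ R := by simpa using hKR hz
    have hxi : R + d ≤ ‖(x i : ℂ)‖ := by
      rw [Complex.norm_real, Real.norm_eq_abs]
      have : d ≤ d * ((i : ℕ) + 1) := le_mul_of_one_le_right hd.le (by simp)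
      exact (le_abs_self _).trans' (by simp only [x]; linarith)
    linarith [norm_sub_norm_le (x i : ℂ) z, dist_eq_norm (x i : ℂ) z]

section Buffer

variable {n : ℕ} {s g b : Fin n → ℂ}

def IsBuffer (s g b : Fin n → ℂ) : Prop :=
  FeasibleConfig b ∧ ∀ i j, Disjoint (closedBall (b i) 1) (closedBall (s j) 1) ∧
    Disjoint (closedBall (b i) 1) (closedBall (g j) 1)

theorem exists_isBuffer (s g : Fin n → ℂ) : ∃ b, IsBuffer s g b := by
  have hK : Bornology.IsBounded (Set.range s ∪ Set.range g) :=
    ((Set.finite_range s).union (Set.finite_range g)).isBounded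
  obtain ⟨b, hbb, hbK⟩ := exists_pairwise_lt_dist_of_isBounded n hK 2
  have hdisj {x y : ℂ} (h : 2 < dist x y) : Disjoint (closedBall x 1) (closedBall y 1) :=
    closedBall_disjoint_closedBall (by linarith)
  exact ⟨b, fun i j hij => hdisj (hbb hij), fun i j =>
    ⟨hdisj (hbK i _ (.inl ⟨j, rfl⟩)), hdisj (hbK i _ (.inr ⟨j, rfl⟩))⟩⟩

theorem IsBuffer.ne_start (hb : IsBuffer s g b) (i : Fin n) : b i ≠ s i := fun h =>
  (hb.2 i i).1.ne_of_mem (mem_closedBall_self zero_le_one)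
    (h ▸ mem_closedBall_self zero_le_one) rfl

theorem IsBuffer.ne_goal (hb : IsBuffer s g b) (i : Fin n) : b i ≠ g i := fun h =>
  (hb.2 i i).2.ne_of_mem (mem_closedBall_self zero_le_one)
    (h ▸ mem_closedBall_self zero_le_one) rfl

theorem DepArc.start_ne_goal {i j : Fin n} (hg : FeasibleConfig g) (h : DepArc s g i j) :
    s j ≠ g j := by
  obtain ⟨hij, z, hzg, hzs⟩ := h
  intro hsg
  rw [hsg] at hzs
  exact Set.disjoint_left.mp (hg i j hij) hzg hzs

theorem disjoint_closedBall_of_not_depArc {i j : Fin n} (hij : i ≠ j) (h : ¬ DepArc s g i j) :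
    Disjoint (closedBall (g i) 1) (closedBall (s j) 1) := by
  rw [Set.disjoint_iff_inter_eq_empty, ← Set.not_nonempty_iff_eq_empty]
  exact fun hne => h ⟨hij, hne⟩

theorem feasibleConfig_piecewise (hs : FeasibleConfig s) (hg : FeasibleConfig g)
    (hb : IsBuffer s g b) {A B : Finset (Fin n)}
    (hAB : ∀ i ∈ B, ∀ j ∉ A, j ∉ B → ¬ DepArc s g i j) :
    FeasibleConfig (B.piecewise g (A.piecewise b s)) := by
  intro i j hij
  simp only [Finset.piecewise]
  split_ifs with hiB hjB hjA hiA hjB hjA hjB hjA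
  · exact hg i j hij
  · exact (hb.2 j i).2.symm
  · exact disjoint_closedBall_of_not_depArc hij (hAB i hiB j hjA hjB)
  · exact (hb.2 i j).2
  · exact hb.1 i j hij
  · exact (hb.2 i j).1
  · exact (disjoint_closedBall_of_not_depArc hij.symm (hAB j hjB i hiA hiB)).symm
  · exact (hb.2 j i).1.symm
  · exact hs i j hij

end Buffer

section FeedbackVertexSets

variable {V : Type*} {A : V → V → Prop}

theorem isFVS_univ (A : V → V → Prop) : IsFVS A Set.univ := fun _ h => by
  obtain ⟨_, hab, -⟩ := Relation.TransGen.head'_iff.mp h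
  exact hab.2.1 trivial

theorem exists_isFVS_ncard_eq_nuFVS (A : V → V → Prop) :
    ∃ S : Set V, IsFVS A S ∧ S.ncard = nuFVS A :=
  Nat.sInf_mem (s := {k | ∃ S : Set V, IsFVS A S ∧ S.ncard = k}) ⟨_, _, isFVS_univ A, rfl⟩

/-- A cycle only passes through heads of arcs, so only those need to be broken. -/
theorem IsFVS.inter_of_forall_mem {S M : Set V} (hS : IsFVS A S)
    (hM : ∀ u v, A u v → v ∈ M) : IsFVS A (S ∩ M) := by
  have hlift {a c : V}
      (h : Relation.TransGen (fun u v => A u v ∧ u ∉ S ∩ M ∧ v ∉ S ∩ M) a c) (ha : a ∈ M) : Relation.TransGen (fun u v => A u v ∧ u ∉ S ∧ v ∉ S) a c := by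
    induction h using Relation.TransGen.head_induction_on with
    | single h => exact .single ⟨h.1, fun haS => h.2.1 ⟨haS, ha⟩,
        fun hcS => h.2.2 ⟨hcS, hM _ _ h.1⟩⟩
    | head h _ ih => exact .head ⟨h.1, fun haS => h.2.1 ⟨haS, ha⟩,
        fun hbS => h.2.2 ⟨hbS, hM _ _ h.1⟩⟩ (ih (hM _ _ h.1))
  intro x hx
  obtain ⟨y, -, hyx⟩ := Relation.TransGen.tail'_iff.mp hx
  exact hS x (hlift hx (hM y x hyx.1))

theorem exists_finset_subset_isFVS_card_eq_nuFVS [Finite V] {M : Finset V}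
    (hM : ∀ u v, A u v → v ∈ M) : ∃ S ⊆ M, IsFVS A ↑S ∧ S.card = nuFVS A := by
  classical
  obtain ⟨S, hS, hScard⟩ := exists_isFVS_ncard_eq_nuFVS A
  have hcoe : (↑(M.filter (· ∈ S)) : Set V) = S ∩ ↑M := by ext; simp [and_comm]
  have hT : IsFVS A ↑(M.filter (· ∈ S)) := hcoe ▸ hS.inter_of_forall_mem hM
  refine ⟨M.filter (· ∈ S), Finset.filter_subset _ _, hT, le_antisymm ?_ ?_⟩
  · rw [← hScard, ← Set.ncard_coe_finset, hcoe]
    exact Set.ncard_le_ncard Set.inter_subset_left (Set.toFinite S)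
  · rw [← Set.ncard_coe_finset]
    exact Nat.sInf_le ⟨_, hT, rfl⟩

theorem exists_list_pairwise_not_of_acyclic [Finite V] [DecidableEq V] {r : V → V → Prop}
    (hr : ∀ x, ¬ Relation.TransGen r x x) (U : Finset V) :
    ∃ l : List V, l.Nodup ∧ l.toFinset = U ∧ l.Pairwise fun a c => ¬ r a c := by
  have : Std.Irrefl (Relation.TransGen (flip r)) :=
    ⟨fun x hx => hr x (Relation.transGen_swap.mp hx)⟩
  have hwf : WellFounded (flip r) :=
    Subrelation.wf Relation.TransGen.single (Finite.wellFounded_of_trans_of_irrefl _)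
  induction U using Finset.strongInduction with
  | H U ih =>
    rcases U.eq_empty_or_nonempty with rfl | hU
    · exact ⟨[], List.nodup_nil, rfl, List.Pairwise.nil⟩
    obtain ⟨a, ha, hmin⟩ := hwf.has_min U hU
    obtain ⟨l, hnd, hl, hpw⟩ := ih _ (U.erase_ssubset ha)
    refine ⟨a :: l, ?_, ?_, hpw.cons fun x hx => hmin x ?_⟩
    · refine List.nodup_cons.mpr ⟨?_, hnd⟩
      rw [← List.mem_toFinset, hl]
      exact Finset.notMem_erase a U
    · simp [hl, Finset.insert_erase ha]
    · exact Finset.mem_of_mem_erase (hl ▸ List.mem_toFinset.mpr hx)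

end FeedbackVertexSets

section Phases

variable {n : ℕ} {s g b : Fin n → ℂ}

noncomputable def movedObjects (s g : Fin n → ℂ) : Finset (Fin n) := {i | s i ≠ g i}

@[simp]
theorem mem_movedObjects {i : Fin n} : i ∈ movedObjects s g ↔ s i ≠ g i := by
  simp [movedObjects]

variable (hs : FeasibleConfig s) (hg : FeasibleConfig g) (hb : IsBuffer s g b)
include hs hg hb

theorem isPlan_moveSeq_toBuffer (S : Finset (Fin n)) :
    IsPlan s (S.piecewise b s) (moveSeq b s S.toList) := by
  have := isPlan_moveSeq b S.nodup_toList (fun i _ => hb.ne_start i) fun q₁ _ _ => by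
    simpa using feasibleConfig_piecewise hs hg hb (A := q₁.toFinset) (B := ∅) (by simp)
  rwa [Finset.toList_toFinset] at this

theorem isPlan_moveSeq_toGoal {S : Finset (Fin n)} {l : List (Fin n)} (hl : l.Nodup)
    (hlS : l.toFinset = movedObjects s g \ S)
    (hpw : l.Pairwise fun u v => ¬ (DepArc s g u v ∧ u ∉ S ∧ v ∉ S)) :
    IsPlan (S.piecewise b s) ((movedObjects s g \ S).piecewise g (S.piecewise b s))
      (moveSeq g (S.piecewise b s) l) := by
  have hmem (i : Fin n) : i ∈ l ↔ s i ≠ g i ∧ i ∉ S := by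
    simpa using congrArg (i ∈ ·) hlS
  have := isPlan_moveSeq g (c := S.piecewise b s) hl (fun i hi => ?_) fun q₁ q₂ hq => ?_
  · rwa [hlS] at this
  · rw [Finset.piecewise_eq_of_notMem _ _ _ ((hmem i).mp hi).2]
    exact ((hmem i).mp hi).1.symm
  · refine feasibleConfig_piecewise hs hg hb fun i hi j hjS hj harc => ?_
    rw [List.mem_toFinset] at hi hj
    have hil : i ∈ l := hq ▸ List.mem_append_left q₂ hi
    have hjl : j ∈ q₂ := by
      have := (hmem j).mpr ⟨harc.start_ne_goal hg, hjS⟩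
      rw [hq, List.mem_append] at this
      exact this.resolve_left hj
    exact (hq ▸ hpw).rel_of_mem_append hi hjl ⟨harc, ((hmem i).mp hil).2, hjS⟩

theorem isPlan_moveSeq_fromBuffer (S : Finset (Fin n)) :
    IsPlan ((movedObjects s g \ S).piecewise g (S.piecewise b s)) g
      (moveSeq g ((movedObjects s g \ S).piecewise g (S.piecewise b s)) S.toList) := by
  have hpiecewise (T : Finset (Fin n)) :
      T.piecewise g ((movedObjects s g \ S).piecewise g (S.piecewise b s)) =
        (T ∪ (movedObjects s g \ S)).piecewise g (S.piecewise b s) := by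
    ext j
    by_cases hjT : j ∈ T <;> simp [Finset.piecewise, hjT]
  have := isPlan_moveSeq g (c := (movedObjects s g \ S).piecewise g (S.piecewise b s))
    S.nodup_toList (fun i hi => ?_) fun q₁ _ _ => ?_
  · convert this using 1
    ext j
    by_cases hjS : j ∈ S <;> by_cases hj : s j = g j <;> simp [Finset.piecewise, hjS, hj]
  · rw [Finset.mem_toList] at hi
    rw [Finset.piecewise_eq_of_notMem _ _ _ (by simp [hi]), Finset.piecewise_eq_of_mem _ _ _ hi]
    exact (hb.ne_goal i).symm
  · rw [hpiecewise]
    refine feasibleConfig_piecewise hs hg hb fun i _ j hjS hj harc => hj ?_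
    simp [hjS, harc.start_ne_goal hg]

end Phases

open Metric in
/-- Every tabletop rearrangement instance admits a plan consisting of exactly
`|{i : sᵢ ≠ gᵢ}| + ν` pick-and-place actions, where `ν` is the minimum cardinality of a
feedback vertex set of the dependency digraph of the instance. -/
theorem stmt_14 {n : ℕ} (s g : Fin n → ℂ)
    (hs : ∀ i j : Fin n, i ≠ j → Disjoint (closedBall (s i) 1) (closedBall (s j) 1))
    (hg : ∀ i j : Fin n, i ≠ j → Disjoint (closedBall (g i) 1) (closedBall (g j) 1)) :
    ∃ plan : List (Fin n → ℂ), IsPlan s g plan ∧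
      plan.length = {i : Fin n | s i ≠ g i}.ncard + nuFVS (DepArc s g) := by
  obtain ⟨S, hSM, hS, hScard⟩ := exists_finset_subset_isFVS_card_eq_nuFVS
    (A := DepArc s g) (M := movedObjects s g) fun _ _ h =>
      mem_movedObjects.mpr (DepArc.start_ne_goal hg h)
  obtain ⟨l, hl, hlS, hpw⟩ := exists_list_pairwise_not_of_acyclic hS (movedObjects s g \ S)
  obtain ⟨b, hb⟩ := exists_isBuffer s g
  refine ⟨_, ((isPlan_moveSeq_toBuffer hs hg hb S).append
    (isPlan_moveSeq_toGoal hs hg hb hl hlS hpw)).append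
      (isPlan_moveSeq_fromBuffer hs hg hb S), ?_⟩
  have hmoved : {i : Fin n | s i ≠ g i}.ncard = (movedObjects s g).card := by
    rw [← Set.ncard_coe_finset, movedObjects, Finset.coe_filter_univ]
  rw [List.length_append, List.length_append, moveSeq_length, moveSeq_length, moveSeq_length,
    Finset.length_toList, ← List.toFinset_card_of_nodup hl, hlS,
    Finset.card_sdiff_of_subset hSM, hmoved, hScard]
  have := Finset.card_le_card hSM
  omega
end
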